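/- arXiv:1911.08549 — 3 statements merged into one kernel-verified Lean document; each statement's English description precedes it below -/
import Mathlib

section
/- Let q = p^a be an odd prime power. Then the irreducible cyclic code C((q+1)/2, q²) over F_p has exactly two nonzero weights, namely w = (p−1)p^{a−1} with frequency 2(q−1), and 2w = 2(p−1)p^{a−1} with frequency (q−1)². -/
/-!
Write `q = p ^ a`, so `E = 𝔽_{q²}`, and `θ = ω ^ k`, a primitive `2(q - 1)`-th root of unity.
The coordinates of `c_γ` are the values `Tr(γ x)` at the roots of `x ^ (q - 1) = ±1`, that is
at the nonzero solutions of `x ^ q = x` (the subfield `𝔽_q`) and of `x ^ q = -x`; each of these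
equations has exactly `q` solutions. On the solutions of `x ^ q = ε x` we have
`Tr_{E/𝔽_p}(γ x) = Tr_{𝔽_q/𝔽_p}((γ + ε γ ^ q) x)`, an additive polynomial of degree
`p ^ (a - 1)` in `x`: it vanishes identically if `γ + ε γ ^ q = 0`, and otherwise each of its
`p` level sets has at most, hence exactly, `p ^ (a - 1)` points. So `wt(c_γ)` is
`(p - 1) p ^ (a - 1)` times the number of the conditions `γ ^ q = γ`, `γ ^ q = -γ` that fail,
and counting the `γ` by these conditions gives the weight distribution.
-/

open scoped BigOperators

/-- `Ψ_b(x) = x^(b-1) + ⋯ + x + 1`. -/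
def psi (b x : ℕ) : ℕ := ∑ i ∈ Finset.range b, x ^ i

/-- `n` is a primitive divisor of `p^m - 1`. -/
def IsPrimitiveDivisor (n p m : ℕ) : Prop :=
  n ∣ p ^ m - 1 ∧ ∀ t : ℕ, 1 ≤ t → t < m → ¬ n ∣ p ^ t - 1

/-- The codeword `c_γ` of the irreducible cyclic code `C(k,q)` of length `n`;
its `i`-th coordinate is `Tr_{q/p}(γ ω^(k i))`. -/
noncomputable def cycWord (p : ℕ) (F : Type) [Field F] [Fintype F] [Algebra (ZMod p) F]
    (ω : F) (k n : ℕ) (γ : F) : Fin n → ZMod p :=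
  fun i => Algebra.trace (ZMod p) F (γ * ω ^ (k * (i : ℕ)))

/-- The irreducible cyclic code `C(k,q)` as a finite set of codewords. -/
noncomputable def cycCode (p : ℕ) (F : Type) [Field F] [Fintype F] [Algebra (ZMod p) F]
    (ω : F) (k n : ℕ) : Finset (Fin n → ZMod p) :=
  Finset.image (cycWord p F ω k n) Finset.univ

/-- Hamming weight of a codeword: the number of nonzero coordinates. -/
def wt {p n : ℕ} (c : Fin n → ZMod p) : ℕ :=
  (Finset.univ.filter fun i => c i ≠ 0).card

/-- `A_w`: the number of codewords of weight `w` in `C(k,q)`. -/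
noncomputable def freq (p : ℕ) (F : Type) [Field F] [Fintype F] [Algebra (ZMod p) F]
    (ω : F) (k n w : ℕ) : ℕ :=
  ((cycCode p F ω k n).filter fun c => wt c = w).card

open Finset Polynomial

theorem Polynomial.card_filter_isRoot_le {R : Type*} [CommRing R] [IsDomain R] [DecidableEq R]
    {f : R[X]} (hf : f ≠ 0) (s : Finset R) : #{x ∈ s | f.IsRoot x} ≤ f.natDegree :=
  card_le_degree_of_subset_roots fun _ hx => (mem_roots hf).2 (mem_filter.1 hx).2

theorem card_filter_pow_eq_mul_le {E : Type*} [Field E] [Fintype E] [DecidableEq E] {q : ℕ}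
    (hq : 1 < q) (c : E) : #{x : E | x ^ q = c * x} ≤ q := by
  have hdeg : (X ^ q - C c * X : E[X]).natDegree = q := by
    rw [natDegree_sub_eq_left_of_natDegree_lt] <;> rw [natDegree_X_pow]
    exact (natDegree_C_mul_le c X).trans_lt (by rwa [natDegree_X])
  have hne : (X ^ q - C c * X : E[X]) ≠ 0 := by
    rintro h
    rw [h, natDegree_zero] at hdeg
    omega
  simpa [hdeg, sub_eq_zero] using card_filter_isRoot_le hne univ

theorem card_filter_sum_pow_eq_le {E : Type*} [Field E] [Fintype E] [DecidableEq E] {p a : ℕ}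
    (hp : 1 < p) (ha : 0 < a) {T : E} (hT : T ≠ 0) (s : E) :
    #{x : E | ∑ j ∈ range a, (T * x) ^ p ^ j = s} ≤ p ^ (a - 1) := by
  set f : E[X] := ∑ j ∈ range a, C (T ^ p ^ j) * X ^ p ^ j - C s
  have hcoeff : f.coeff 1 = T := by
    simp only [f, coeff_sub, finsetSum_coeff, coeff_C_mul_X_pow, coeff_C_of_ne_zero one_ne_zero,
      sub_zero, eq_comm (a := 1), Nat.pow_eq_one, hp.ne', false_or]
    rw [sum_ite_eq' _ _ (fun j => T ^ p ^ j), if_pos (mem_range.2 ha), pow_zero, pow_one]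
  have hf : f ≠ 0 := fun h => hT (by rw [← hcoeff, h, coeff_zero])
  have hdeg : f.natDegree ≤ p ^ (a - 1) := by
    refine (natDegree_sub_le _ _).trans (max_le ?_ (by simp))
    refine natDegree_sum_le_of_forall_le _ _ fun j hj => (natDegree_C_mul_X_pow_le _ _).trans ?_
    exact Nat.pow_le_pow_right (by omega) (by simp at hj; omega)
  refine le_trans (le_of_eq ?_) ((card_filter_isRoot_le hf univ).trans hdeg)
  congr 1
  ext x
  simp [f, eval_finsetSum, mul_pow, sub_eq_zero]

theorem eq_zero_of_pow_eq_self_of_pow_eq_neg {E : Type*} [Field E] (h2 : (2 : E) ≠ 0) {q : ℕ}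
    {x : E} (hx : x ^ q = x) (hx' : x ^ q = -x) : x = 0 :=
  (mul_eq_zero.1 (by linear_combination hx' - hx : (2 : E) * x = 0)).resolve_left h2

section FrobeniusFixedPoints

variable {E : Type*} [Field E] [Fintype E] {p : ℕ} [Fact p.Prime] [CharP E p] {a : ℕ}

theorem algebraMap_trace_mul_eq_sum [Algebra (ZMod p) E] (hE : Fintype.card E = (p ^ a) ^ 2)
    {ε x : E} (hx : x ^ p ^ a = ε * x) (c : E) :
    algebraMap (ZMod p) E (Algebra.trace (ZMod p) E (c * x)) =
      ∑ j ∈ range a, ((c + ε * c ^ p ^ a) * x) ^ p ^ j := by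
  have hp := (Fact.out : p.Prime)
  have hrank : Module.finrank (ZMod p) E = a + a := by
    have hcard := Module.card_eq_pow_finrank (K := ZMod p) (V := E)
    rw [ZMod.card, hE, ← pow_mul, mul_two] at hcard
    exact Nat.pow_right_injective hp.two_le hcard.symm
  rw [FiniteField.algebraMap_trace_eq_sum_pow, hrank, Nat.card_zmod, sum_range_add,
    ← sum_add_distrib]
  refine sum_congr rfl fun j _ => ?_
  rw [pow_add, pow_mul, mul_pow c x (p ^ a), hx, ← add_pow_char_pow]
  ring

variable [DecidableEq E]

theorem card_filter_pow_eq_self_and_neg (ha : 0 < a) (hE : Fintype.card E = (p ^ a) ^ 2) :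
    #{x : E | x ^ p ^ a = x} = p ^ a ∧ #{x : E | x ^ p ^ a = -x} = p ^ a := by
  set q := p ^ a
  have hq : 1 < q := Nat.one_lt_pow ha.ne' (Fact.out : p.Prime).one_lt
  let φ : E →+ E := (iterateFrobenius E p a).toAddMonoidHom - AddMonoidHom.id E
  have hφ (x : E) : φ x = x ^ q - x := by simp [φ, iterateFrobenius_def, q]
  -- `φ` is additive, so all its fibres are translates of its kernel `{x | x ^ q = x}`
  have hfibres : q ^ 2 = #(univ.image φ) * #{x : E | x ^ q = x} := by
    rw [← hE, ← card_univ, card_eq_sum_card_image φ univ, ← smul_eq_mul, ← sum_const]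
    refine sum_congr rfl fun y hy => ?_
    rw [AddMonoidHom.card_fiber_eq_of_mem_range φ (by simpa using hy) ⟨0, map_zero φ⟩]
    simp [hφ, sub_eq_zero]
  have himage : #(univ.image φ) ≤ #{x : E | x ^ q = -x} := by
    refine card_le_card fun y hy => ?_
    obtain ⟨x, -, rfl⟩ := mem_image.1 hy
    have hx : x ^ (q * q) = x := by rw [← sq, ← hE, FiniteField.pow_card]
    simp [hφ, sub_pow_char_pow, ← pow_mul, hx, q]
  have hA : #{x : E | x ^ q = x} ≤ q := by
    simpa using card_filter_pow_eq_mul_le hq (1 : E)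
  have hB : #{x : E | x ^ q = -x} ≤ q := by
    simpa using card_filter_pow_eq_mul_le hq (-1 : E)
  constructor <;> nlinarith

theorem card_filter_trace_mul_ne_zero [Algebra (ZMod p) E] (ha : 0 < a)
    (hE : Fintype.card E = (p ^ a) ^ 2) {ε : E} (hS : #{x : E | x ^ p ^ a = ε * x} = p ^ a)
    (c : E) :
    #{x : E | x ^ p ^ a = ε * x ∧ Algebra.trace (ZMod p) E (c * x) ≠ 0} =
      if c + ε * c ^ p ^ a = 0 then 0 else (p - 1) * p ^ (a - 1) := by
  have hp := (Fact.out : p.Prime)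
  set S : Finset E := {x : E | x ^ p ^ a = ε * x}
  set T := c + ε * c ^ p ^ a
  have htrace : ∀ x ∈ S, algebraMap (ZMod p) E (Algebra.trace (ZMod p) E (c * x)) =
      ∑ j ∈ range a, (T * x) ^ p ^ j := fun x hx =>
    algebraMap_trace_mul_eq_sum hE (mem_filter.1 hx).2 c
  rw [← filter_filter]
  split_ifs with hT
  · refine card_eq_zero.2 (filter_eq_empty_iff.2 fun x hx htr => htr ?_)
    apply FaithfulSMul.algebraMap_injective (ZMod p) E
    simp [htrace x hx, hT, hp.pos.ne']
  -- the `p` fibres of `x ↦ Tr (c * x)` on `S` each have at most `p ^ (a - 1)` elements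
  -- but together have `p ^ a`, so each has exactly `p ^ (a - 1)`
  have hfibre_le : ∀ t ∈ (univ : Finset (ZMod p)),
      #{x ∈ S | Algebra.trace (ZMod p) E (c * x) = t} ≤ p ^ (a - 1) := by
    intro t _
    refine (card_le_card fun x hx => ?_).trans
      (card_filter_sum_pow_eq_le hp.one_lt ha hT (algebraMap (ZMod p) E t))
    obtain ⟨hxS, hxt⟩ := mem_filter.1 hx
    simp [← htrace x hxS, hxt]
  have hfibres : ∑ t : ZMod p, #{x ∈ S | Algebra.trace (ZMod p) E (c * x) = t} =
      ∑ _t : ZMod p, p ^ (a - 1) := by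
    rw [← card_eq_sum_card_fiberwise fun _ _ => mem_coe.2 (mem_univ _), hS, sum_const,
      card_univ, ZMod.card, smul_eq_mul, ← pow_succ', Nat.sub_add_cancel ha]
  have hzero := (sum_eq_sum_iff_of_le hfibre_le).1 hfibres 0 (mem_univ 0)
  have hsplit := card_filter_add_card_filter_not (s := S)
    (fun x => Algebra.trace (ZMod p) E (c * x) = 0)
  rw [hzero, hS, ← pow_sub_one_mul ha.ne'] at hsplit
  rw [mul_comm, Nat.mul_sub_one]
  exact Nat.eq_sub_of_add_eq' hsplit

end FrobeniusFixedPoints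

theorem isPrimitiveRoot_of_forall_eq_pow {E : Type*} [Field E] [Fintype E]
    (hE : 2 < Fintype.card E) {ω : E} (hω : ∀ x : E, x ≠ 0 → ∃ j : ℕ, ω ^ j = x) :
    IsPrimitiveRoot ω (Fintype.card E - 1) := by
  classical
  have hω0 : ω ≠ 0 := by
    rintro rfl
    have hunits : ∀ x : Eˣ, x = 1 := fun x => by
      obtain ⟨j, hj⟩ := hω x x.ne_zero
      rcases j with _ | j
      · exact Units.ext (by simpa using hj.symm)
      · exact absurd hj.symm (by simp)
    have := Fintype.card_le_one_iff.2 fun x y : Eˣ => (hunits x).trans (hunits y).symm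
    rw [Fintype.card_units] at this
    omega
  have hgen : ∀ x : Eˣ, x ∈ Subgroup.zpowers (Units.mk0 ω hω0) := fun x => by
    obtain ⟨j, hj⟩ := hω x x.ne_zero
    exact ⟨j, Units.ext (by simp [hj])⟩
  rw [← Fintype.card_units, ← Nat.card_eq_fintype_card,
    ← orderOf_eq_card_of_forall_mem_zpowers hgen]
  exact IsPrimitiveRoot.coe_units_iff.2 (IsPrimitiveRoot.orderOf (Units.mk0 ω hω0))

theorem IsPrimitiveRoot.card_filter_range_pow {R : Type*} [CommRing R] [IsDomain R] [Fintype R]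
    [DecidableEq R] {ζ : R} {m : ℕ} [NeZero m] (hζ : IsPrimitiveRoot ζ m) (P : R → Prop)
    [DecidablePred P] : #{i ∈ range m | P (ζ ^ i)} = #{x : R | x ^ m = 1 ∧ P x} := by
  refine card_bij (fun i _ => ζ ^ i) (fun i hi => ?_) (fun i hi j hj hij => ?_) fun x hx => ?_
  · simp only [mem_filter, mem_univ, true_and] at hi ⊢
    exact ⟨by rw [← pow_mul, mul_comm, pow_mul, hζ.pow_eq_one, one_pow], hi.2⟩
  · exact hζ.pow_inj (mem_range.1 (mem_filter.1 hi).1) (mem_range.1 (mem_filter.1 hj).1) hij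
  · obtain ⟨hxm, hPx⟩ := (mem_filter.1 hx).2
    obtain ⟨i, hi, rfl⟩ := hζ.eq_pow_of_pow_eq_one hxm
    exact ⟨i, mem_filter.2 ⟨mem_range.2 hi, hPx⟩, rfl⟩

section Weight

variable {E : Type*} [Field E] [DecidableEq E] {q w : ℕ}

def frobWeight (q w : ℕ) (γ : E) : ℕ :=
  (if γ ^ q = γ then 0 else w) + (if γ ^ q = -γ then 0 else w)

theorem frobWeight_eq_zero_iff (h2 : (2 : E) ≠ 0) (hq : q ≠ 0) (hw : 0 < w) {γ : E} :
    frobWeight q w γ = 0 ↔ γ = 0 := by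
  refine ⟨fun h => ?_, fun h => by simp [frobWeight, h, hq]⟩
  unfold frobWeight at h
  split_ifs at h with h₁ h₂ <;>
    first | omega | exact eq_zero_of_pow_eq_self_of_pow_eq_neg h2 h₁ h₂

theorem frobWeight_mem (γ : E) :
    frobWeight q w γ = 0 ∨ frobWeight q w γ = w ∨ frobWeight q w γ = 2 * w := by
  unfold frobWeight
  split_ifs <;> omega

variable [Fintype E]

theorem card_filter_pow_eq_self_or_neg (h2 : (2 : E) ≠ 0) (hq : q ≠ 0)
    (hA : #{x : E | x ^ q = x} = q) (hB : #{x : E | x ^ q = -x} = q) :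
    #{x : E | x ^ q = x ∨ x ^ q = -x} = 2 * q - 1 := by
  have hinter :
      (univ.filter (fun x : E => x ^ q = x) ∩ univ.filter (fun x => x ^ q = -x)) = {0} := by
    ext x
    simp only [mem_inter, mem_filter, mem_univ, true_and, mem_singleton]
    refine ⟨fun h => eq_zero_of_pow_eq_self_of_pow_eq_neg h2 h.1 h.2, ?_⟩
    rintro rfl
    simp [hq]
  have hunion := card_union_add_card_inter (univ.filter fun x : E => x ^ q = x)
    (univ.filter fun x => x ^ q = -x)
  rw [← filter_or, hinter, card_singleton, hA, hB] at hunion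
  omega

theorem card_filter_frobWeight_eq (h2 : (2 : E) ≠ 0) (hq : q ≠ 0) (hw : 0 < w)
    (hA : #{x : E | x ^ q = x} = q) (hB : #{x : E | x ^ q = -x} = q) :
    #{γ : E | frobWeight q w γ = w} = 2 * (q - 1) := by
  have hfilter : univ.filter (fun γ : E => frobWeight q w γ = w) =
      (univ.filter fun x : E => x ^ q = x ∨ x ^ q = -x).erase 0 := by
    ext γ
    have hzero := (frobWeight_eq_zero_iff (w := w) h2 hq hw (γ := γ))
    simp only [mem_erase, mem_filter, mem_univ, true_and]
    unfold frobWeight at hzero ⊢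
    split_ifs at hzero ⊢ <;> simp_all [hw.ne, hw.ne']
  rw [hfilter, card_erase_of_mem (by simp [hq]), card_filter_pow_eq_self_or_neg h2 hq hA hB]
  omega

theorem card_filter_frobWeight_eq_two_mul (h2 : (2 : E) ≠ 0) (hq : q ≠ 0) (hw : 0 < w)
    (hE : Fintype.card E = q ^ 2)
    (hA : #{x : E | x ^ q = x} = q) (hB : #{x : E | x ^ q = -x} = q) :
    #{γ : E | frobWeight q w γ = 2 * w} = (q - 1) ^ 2 := by
  have hfilter : univ.filter (fun γ : E => frobWeight q w γ = 2 * w) =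
      univ.filter (fun x => ¬(x ^ q = x ∨ x ^ q = -x)) := by
    ext γ
    simp only [mem_filter, mem_univ, true_and]
    unfold frobWeight
    split_ifs <;> simp_all <;> omega
  have hsplit := card_filter_add_card_filter_not (s := (univ : Finset E))
    (fun x => x ^ q = x ∨ x ^ q = -x)
  rw [card_univ, hE, card_filter_pow_eq_self_or_neg h2 hq hA hB] at hsplit
  rw [hfilter]
  obtain ⟨r, rfl⟩ := Nat.exists_eq_add_one_of_ne_zero hq
  have hsq : (r + 1) ^ 2 = r ^ 2 + 2 * r + 1 := by ring
  simp only [Nat.add_sub_cancel]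
  omega

end Weight

section CyclicCode

variable {p : ℕ} {F : Type} [Field F] [Fintype F] [Algebra (ZMod p) F] {ω : F} {k n : ℕ}

theorem wt_cycWord (γ : F) :
    wt (cycWord p F ω k n γ) =
      #{i ∈ range n | Algebra.trace (ZMod p) F (γ * (ω ^ k) ^ i) ≠ 0} := by
  refine card_bij (fun i _ => i) (fun i hi => ?_) (fun i _ j _ h => Fin.ext h) fun j hj => ?_
  · simpa [cycWord, pow_mul] using hi
  · obtain ⟨hj, hne⟩ := mem_filter.1 hj
    exact ⟨⟨j, mem_range.1 hj⟩, by simpa [cycWord, pow_mul] using hne, rfl⟩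

theorem cycWord_sub (γ δ : F) :
    cycWord p F ω k n (γ - δ) = cycWord p F ω k n γ - cycWord p F ω k n δ := by
  ext i
  simp [cycWord, sub_mul]

theorem cycWord_injective (h : ∀ γ, wt (cycWord p F ω k n γ) = 0 → γ = 0) :
    Function.Injective (cycWord p F ω k n) := fun γ δ hγδ => by
  refine sub_eq_zero.1 (h _ ?_)
  rw [cycWord_sub, hγδ, sub_self]
  simp [wt]

theorem freq_eq_card_filter (hinj : Function.Injective (cycWord p F ω k n)) (w : ℕ) :
    freq p F ω k n w = #{γ : F | wt (cycWord p F ω k n γ) = w} := by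
  rw [freq, cycCode, filter_image, card_image_of_injective _ hinj]

end CyclicCode

theorem wt_cycWord_eq_frobWeight {p a : ℕ} [Fact p.Prime] (hp2 : p ≠ 2) (ha : 0 < a)
    {E : Type} [Field E] [Fintype E] [DecidableEq E] [Algebra (ZMod p) E]
    (hE : Fintype.card E = (p ^ a) ^ 2) {ω : E} {k : ℕ}
    (hθ : IsPrimitiveRoot (ω ^ k) (2 * (p ^ a - 1))) (γ : E) :
    wt (cycWord p E ω k (2 * (p ^ a - 1)) γ) = frobWeight (p ^ a) ((p - 1) * p ^ (a - 1)) γ := by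
  have : CharP E p := charP_of_injective_algebraMap' (ZMod p) p
  set q := p ^ a
  have hq : 1 < q := Nat.one_lt_pow ha.ne' (Fact.out : p.Prime).one_lt
  have : NeZero (2 * (q - 1)) := ⟨by omega⟩
  have h2 : (2 : E) ≠ 0 := Ring.two_ne_zero (by rwa [ringChar.eq E p])
  obtain ⟨hA, hB⟩ := card_filter_pow_eq_self_and_neg ha hE
  have hroots (x : E) : (x ^ (2 * (q - 1)) = 1 ∧ Algebra.trace (ZMod p) E (γ * x) ≠ 0) ↔
      (x ^ q = 1 * x ∧ Algebra.trace (ZMod p) E (γ * x) ≠ 0) ∨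
        (x ^ q = -1 * x ∧ Algebra.trace (ZMod p) E (γ * x) ≠ 0) := by
    by_cases htr : Algebra.trace (ZMod p) E (γ * x) = 0
    · simp [htr]
    have hx : x ≠ 0 := by rintro rfl; simp at htr
    rw [pow_mul', sq_eq_one_iff, ← pow_sub_one_mul (by omega : q ≠ 0), mul_left_inj' hx,
      mul_left_inj' hx]
    tauto
  rw [wt_cycWord, hθ.card_filter_range_pow (fun x => Algebra.trace (ZMod p) E (γ * x) ≠ 0),
    filter_congr fun x _ => hroots x, filter_or, card_union_of_disjoint ?_,
    card_filter_trace_mul_ne_zero ha hE (by simpa using hA),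
    card_filter_trace_mul_ne_zero ha hE (by simpa using hB), frobWeight]
  · rw [add_comm]
    simp only [one_mul, neg_one_mul, add_eq_zero_iff_eq_neg', neg_inj]
    rfl
  · refine disjoint_filter.2 fun x _ hx hx' => hx.2 ?_
    have hx0 : x = 0 :=
      eq_zero_of_pow_eq_self_of_pow_eq_neg h2 (by simpa using hx.1) (by simpa using hx'.1)
    rw [hx0, mul_zero, map_zero]

theorem eq_two_mul_sub_one_of_mul_eq {q k n : ℕ} (hk : 2 * k = q + 1) (hn : n * k = q ^ 2 - 1) :
    n = 2 * (q - 1) := by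
  refine Nat.eq_of_mul_eq_mul_right (by omega : 0 < k) ?_
  rw [hn, ← one_pow 2, Nat.sq_sub_sq, one_pow, ← hk]
  ring

theorem stmt3 (p a k n : ℕ) (hp : p.Prime) (hp2 : p ≠ 2) (ha : 0 < a)
    (E : Type) [Field E] [Fintype E] [Algebra (ZMod p) E]
    (hE : Fintype.card E = (p ^ a) ^ 2)
    (ω : E) (hω : ∀ x : E, x ≠ 0 → ∃ j : ℕ, ω ^ j = x)
    (hk : 2 * k = p ^ a + 1) (hn : n * k = (p ^ a) ^ 2 - 1) :
    (∀ x ∈ cycCode p E ω k n,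
        wt x = 0 ∨ wt x = (p - 1) * p ^ (a - 1) ∨ wt x = 2 * ((p - 1) * p ^ (a - 1))) ∧
    freq p E ω k n ((p - 1) * p ^ (a - 1)) = 2 * (p ^ a - 1) ∧
    freq p E ω k n (2 * ((p - 1) * p ^ (a - 1))) = (p ^ a - 1) ^ 2 := by
  classical
  have : Fact p.Prime := ⟨hp⟩
  have : CharP E p := charP_of_injective_algebraMap' (ZMod p) p
  have h2 : (2 : E) ≠ 0 := Ring.two_ne_zero (by rwa [ringChar.eq E p])
  set q := p ^ a
  have hq : 1 < q := Nat.one_lt_pow ha.ne' hp.one_lt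
  have hq0 : q ≠ 0 := by omega
  have hq2 : 2 < q ^ 2 := by nlinarith
  have hw : 0 < (p - 1) * p ^ (a - 1) :=
    Nat.mul_pos (Nat.sub_pos_of_lt hp.one_lt) (pow_pos hp.pos _)
  obtain rfl := eq_two_mul_sub_one_of_mul_eq hk hn
  have hθ : IsPrimitiveRoot (ω ^ k) (2 * (q - 1)) :=
    (isPrimitiveRoot_of_forall_eq_pow (by rw [hE]; omega) hω).pow (by rw [hE]; omega)
      (by rw [hE, ← hn, mul_comm])
  have hwt := wt_cycWord_eq_frobWeight hp2 ha hE hθ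
  obtain ⟨hA, hB⟩ := card_filter_pow_eq_self_and_neg ha hE
  have hinj := cycWord_injective fun γ h0 => (frobWeight_eq_zero_iff h2 hq0 hw).1 (hwt γ ▸ h0)
  refine ⟨fun x hx => ?_, ?_, ?_⟩
  · obtain ⟨γ, -, rfl⟩ := mem_image.1 hx
    exact hwt γ ▸ frobWeight_mem γ
  · rw [freq_eq_card_filter hinj, filter_congr fun γ _ => by rw [hwt],
      card_filter_frobWeight_eq h2 hq0 hw hA hB]
  · rw [freq_eq_card_filter hinj, filter_congr fun γ _ => by rw [hwt],
      card_filter_frobWeight_eq_two_mul h2 hq0 hw hE hA hB]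
end

section
/- Let p and r be distinct primes, m a positive integer, q = p^m with 3 dividing q−1, and c = (q−1)/3. Suppose c is a primitive divisor of p^m − 1, gcd(3, r) = 1, and q ≡ 1 (mod r). Then n = r(q−1)/3 is a primitive divisor of q^r − 1, i.e. of p^{mr} − 1. -/
theorem stmt9 (p r m q c : ℕ) (hp : p.Prime) (hr : r.Prime) (hpr : p ≠ r)
    (hm : 0 < m) (hq : q = p ^ m) (h3 : 3 ∣ q - 1) (hc : 3 * c = q - 1)
    (hcprim : IsPrimitiveDivisor c p m) (h3r : Nat.Coprime 3 r)
    (hq1 : Nat.ModEq r q 1) :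
    IsPrimitiveDivisor (r * c) p (m * r) := by
  obtain ⟨hc1, hc2⟩ := hcprim
  have hp2 : 2 ≤ p := hp.two_le
  have hq2 : 2 ≤ q := by
    rw [hq]; calc 2 ≤ p := hp2
      _ ≤ p ^ m := Nat.le_self_pow hm.ne' p
  have hq4 : 4 ≤ q := by omega
  have hc0 : 0 < c := by omega
  have hr2 : 2 ≤ r := hr.two_le
  -- cast facts
  have hps : ∀ s : ℕ, ((p ^ s - 1 : ℕ) : ℤ) = (p : ℤ) ^ s - 1 := by
    intro s
    have : 1 ≤ p ^ s := Nat.one_le_pow _ _ (by omega)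
    push_cast [this]; ring
  have hqZ : ((p : ℤ)) ^ m = (q : ℤ) := by rw [hq]; push_cast; ring
  have hqzmod : (q : ZMod r) = 1 := by
    have := (ZMod.natCast_eq_natCast_iff q 1 r).mpr hq1
    simpa using this
  -- key : r divides the geometric sum iff r divides k
  have key : ∀ k : ℕ, ((r : ℤ) ∣ ∑ i ∈ Finset.range k, (q : ℤ) ^ i) ↔ (r : ℕ) ∣ k := by
    intro k
    rw [← ZMod.intCast_zmod_eq_zero_iff_dvd]
    push_cast [hqzmod]
    simp only [one_pow, Finset.sum_const, Finset.card_range, nsmul_eq_mul, mul_one]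
    exact ZMod.natCast_eq_zero_iff k r
  have hgeom : ∀ k : ℕ, (q : ℤ) ^ k - 1 = (∑ i ∈ Finset.range k, (q : ℤ) ^ i) * ((q : ℤ) - 1) :=
    fun k => (geom_sum_mul (q : ℤ) k).symm
  have hq3c : (q : ℤ) - 1 = 3 * c := by omega
  have hcq : (c : ℤ) ∣ (q : ℤ) - 1 := ⟨3, by rw [hq3c]; ring⟩
  constructor
  · -- divisibility
    rw [← Int.natCast_dvd_natCast, hps]
    have : (p : ℤ) ^ (m * r) - 1 = (q : ℤ) ^ r - 1 := by rw [pow_mul, hqZ]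
    rw [this, hgeom r]
    push_cast
    exact mul_dvd_mul ((key r).mpr dvd_rfl) hcq
  · intro t ht1 ht2 hdvd
    -- c divides p^t - 1
    have hct : c ∣ p ^ t - 1 := (dvd_mul_left c r).trans hdvd
    -- first show m ∣ t using multiplicative order in ZMod c
    have hc2' : 2 ≤ c := by
      by_contra h
      have hceq : c = 1 := by omega
      -- then m = 1 (else hc2 1 contradicts), and q = p, 3 = p - 1, p = 4, not prime
      have hm1 : m = 1 := by
        by_contra hm1
        exact hc2 1 le_rfl (by omega) (by rw [hceq]; exact one_dvd _)
      have : p = 4 := by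
        have : q = p := by rw [hq, hm1, pow_one]
        omega
      rw [this] at hp
      norm_num at hp
    haveI : NeZero c := ⟨by omega⟩
    haveI : Fact (1 < c) := ⟨by omega⟩
    have hiff : ∀ s : ℕ, c ∣ p ^ s - 1 ↔ (p : ZMod c) ^ s = 1 := by
      intro s
      have h1 : 1 ≤ p ^ s := Nat.one_le_pow _ _ (by omega)
      rw [← Nat.modEq_iff_dvd' h1]
      constructor
      · intro h
        have := (ZMod.natCast_eq_natCast_iff 1 (p ^ s) c).mpr h
        push_cast at this
        exact this.symm
      · intro h
        have : ((1 : ℕ) : ZMod c) = ((p ^ s : ℕ) : ZMod c) := by push_cast; exact h.symm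
        exact (ZMod.natCast_eq_natCast_iff 1 (p ^ s) c).mp this
    have hpm : (p : ZMod c) ^ m = 1 := (hiff m).mp hc1
    have hfin : IsOfFinOrder (p : ZMod c) :=
      isOfFinOrder_iff_pow_eq_one.mpr ⟨m, hm, hpm⟩
    have hord : orderOf (p : ZMod c) = m := by
      have hd : orderOf (p : ZMod c) ∣ m := orderOf_dvd_of_pow_eq_one hpm
      have hpos : 0 < orderOf (p : ZMod c) := hfin.orderOf_pos
      rcases Nat.lt_or_ge (orderOf (p : ZMod c)) m with hlt | hge
      · exact absurd ((hiff _).mpr (pow_orderOf_eq_one _)) (hc2 _ hpos hlt)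
      · exact le_antisymm (Nat.le_of_dvd hm hd) hge
    have hmt : m ∣ t := by
      rw [← hord]
      exact orderOf_dvd_of_pow_eq_one ((hiff t).mp hct)
    obtain ⟨k, hk⟩ := hmt
    have hk1 : 1 ≤ k := by
      rcases Nat.eq_zero_or_pos k with h | h
      · rw [h, mul_zero] at hk; omega
      · exact h
    have hkr : k < r := by
      by_contra h
      push_neg at h
      have : m * r ≤ m * k := Nat.mul_le_mul_left m h
      omega
    -- now derive contradiction: r ∣ k
    have hdvdZ : ((r : ℤ) * c) ∣ (q : ℤ) ^ k - 1 := by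
      have := (Int.natCast_dvd_natCast.mpr hdvd)
      rw [hps] at this
      push_cast at this ⊢
      rwa [hk, pow_mul, hqZ] at this
    rw [hgeom k] at hdvdZ
    obtain ⟨d, hd⟩ := hdvdZ
    rw [hq3c] at hd
    have hrd : (r : ℤ) ∣ 3 * (∑ i ∈ Finset.range k, (q : ℤ) ^ i) := by
      refine ⟨d, ?_⟩
      have hcne : (c : ℤ) ≠ 0 := by exact_mod_cast hc0.ne'
      have : (∑ i ∈ Finset.range k, (q : ℤ) ^ i) * 3 * c = r * d * c := by
        rw [mul_assoc]; linarith [hd]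
      have := mul_right_cancel₀ hcne this
      linarith [this]
    have hr3 : ¬ ((r : ℤ) ∣ 3) := by
      intro h
      have h3' : r ∣ 3 := by exact_mod_cast h
      have : r = 3 := (Nat.prime_dvd_prime_iff_eq hr (by norm_num)).mp h3'
      rw [this] at h3r
      simp [Nat.Coprime] at h3r
    have hrs : (r : ℤ) ∣ ∑ i ∈ Finset.range k, (q : ℤ) ^ i := by
      rcases (Int.Prime.dvd_mul' (by exact_mod_cast hr) hrd) with h | h
      · exact absurd h hr3
      · exact h
    have : r ∣ k := (key k).mp hrs
    have := Nat.le_of_dvd (by omega) this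
    omega
end

section
/- Let p be a prime and let k, m, n be positive integers such that k divides (p^m−1)/(p−1) and n = (p^m−1)/k is a primitive divisor of p^m−1. For β ∈ F_{p^m} let λ_β = Σ_{r ∈ R_k} ζ_p^{Tr_{p^m/p}(βr)} ∈ ℂ, where R_k = {x^k : x ∈ F_{p^m}^*} (the set of nonzero k-th powers, each counted once), ζ_p = e^{2πi/p} and Tr_{p^m/p} is the field trace; λ_β is the eigenvalue of the generalized Paley graph Γ(k, p^m) associated with β. Then for every β ∈ F_{p^m}, 1 + #{(x,y) ∈ F_{p^m} × F_{p^m} : y^p − y = βx^k} = p^m + p + k(p−1)·λ_β, an equality of complex numbers; in particular λ_β is a rational integer. -/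
open scoped BigOperators

/-- `ζ_p = e^(2πi/p)`. -/
noncomputable def zetaP (p : ℕ) : ℂ := Complex.exp (2 * Real.pi * Complex.I / p)

/-- The eigenvalue `λ_β = Σ_{r ∈ R_k} ζ_p^(Tr(β r))` of the generalized Paley graph
`Γ(k, q)`, where `R_k` is the set of nonzero `k`-th powers (each counted once). -/
noncomputable def paleyEig (p : ℕ) (F : Type) [Field F] [Fintype F] [DecidableEq F]
    [Algebra (ZMod p) F] (k : ℕ) (β : F) : ℂ :=
  ∑ r ∈ Finset.image (fun x : F => x ^ k) (Finset.univ.filter fun x : F => x ≠ 0),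
    zetaP p ^ ((Algebra.trace (ZMod p) F (β * r)).val : ℕ)

/-!
For fixed `c`, the equation `y ^ p - y = c` has `p` solutions when `Tr c = 0` and none otherwise:
`y ↦ y ^ p - y` is `𝔽_p`-linear with kernel `𝔽_p`, and its image, which the trace kills because
the trace is Frobenius-invariant, has the same size as the kernel of the trace. Every element of
`R_k` is the `k`-th power of exactly `k` nonzero `x`, so the curve has `p (1 + k A₀)` affine
points, where `A_c = #{r ∈ R_k | Tr (β r) = c}`.

Since `n * k = p ^ m - 1`, `R_k` is the group of `n`-th roots of unity, and it contains `𝔽_p^*`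
because `p - 1 ∣ n`. Scaling by `𝔽_p^*` then shows that `A_c = A₁` for all `c ≠ 0`, so
`λ_β = A₀ + A₁ ∑_{c ≠ 0} ζ_p ^ c = A₀ - A₁` and `A₀ + (p - 1) A₁ = #R_k = n`; the formula follows.
-/

open Finset

theorem AddMonoidHom.card_image_mul_card_filter_eq_zero {G H Φ : Type*} [AddGroup G] [Fintype G]
    [AddMonoid H] [DecidableEq H] [FunLike Φ G H] [AddMonoidHomClass Φ G H] (f : Φ) :
    #(univ.image f) * #{x | f x = 0} = Fintype.card G := by
  rw [← card_univ, card_eq_sum_card_image f univ, sum_const_nat fun c hc => ?_]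
  obtain ⟨x, -, rfl⟩ := mem_image.1 hc
  exact AddMonoidHom.card_fiber_eq_of_mem_range f ⟨x, rfl⟩ ⟨0, map_zero f⟩

theorem card_filter_prod_eq_sum {α β : Type*} [Fintype α] [Fintype β] (P : α → β → Prop)
    [∀ x y, Decidable (P x y)] :
    #{xy : α × β | P xy.1 xy.2} = ∑ x, (#{y | P x y} : ℕ) := by
  simp only [card_filter, Fintype.sum_prod_type]

theorem IsPrimitiveRoot.sum_pow_val_eq_zero {R : Type*} [CommRing R] [IsDomain R] {p : ℕ}
    [NeZero p] {ζ : R} (hζ : IsPrimitiveRoot ζ p) (hp : 1 < p) :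
    ∑ c : ZMod p, ζ ^ c.val = 0 := by
  rw [← hζ.geom_sum_eq_zero hp]
  exact sum_nbij' ZMod.val (fun i => (i : ZMod p)) (fun c _ => mem_range.2 (ZMod.val_lt c))
    (fun _ _ => mem_univ _) (fun c _ => ZMod.natCast_zmod_val c)
    (fun i hi => ZMod.val_cast_of_lt (mem_range.1 hi)) (fun _ _ => rfl)

theorem IsPrimitiveRoot.sum_pow_val_eq_card_sub_card {R ι : Type*} [CommRing R] [IsDomain R]
    {p : ℕ} [Fact p.Prime] {ζ : R} (hζ : IsPrimitiveRoot ζ p) (S : Finset ι) (f : ι → ZMod p)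
    (hf : ∀ c ≠ 0, #{r ∈ S | f r = c} = #{r ∈ S | f r = 1}) :
    ∑ r ∈ S, ζ ^ (f r).val = #{r ∈ S | f r = 0} - #{r ∈ S | f r = 1} := by
  have hsplit := Fintype.sum_eq_add_sum_compl (0 : ZMod p) fun c => ζ ^ c.val
  rw [hζ.sum_pow_val_eq_zero (Fact.out : p.Prime).one_lt, ZMod.val_zero, pow_zero] at hsplit
  calc ∑ r ∈ S, ζ ^ (f r).val = ∑ c : ZMod p, #{r ∈ S | f r = c} • ζ ^ c.val := by
        rw [← sum_fiberwise' S f fun c => ζ ^ c.val]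
        exact sum_congr rfl fun c _ => sum_const _
    _ = #{r ∈ S | f r = 0} • 1
          + ∑ c ∈ ({0}ᶜ : Finset (ZMod p)), #{r ∈ S | f r = 1} • ζ ^ c.val := by
        rw [Fintype.sum_eq_add_sum_compl (0 : ZMod p), ZMod.val_zero, pow_zero]
        exact congrArg _ (sum_congr rfl fun c hc => by rw [hf c (by simpa using hc)])
    _ = _ := by
        rw [← smul_sum, eq_neg_of_add_eq_zero_right hsplit.symm]
        simp [sub_eq_add_neg]

theorem isPrimitiveRoot_zetaP {p : ℕ} (hp : p ≠ 0) : IsPrimitiveRoot (zetaP p) p := by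
  unfold zetaP
  exact_mod_cast Complex.isPrimitiveRoot_exp p hp

def nonzeroPowers (F : Type*) [Field F] [Fintype F] [DecidableEq F] (k : ℕ) : Finset F :=
  image (fun x : F => x ^ k) {x | x ≠ 0}

section PowerResidues

variable {F : Type*} [Field F] [Fintype F]

theorem pos_of_dvd_card_sub_one {k : ℕ} (hk : k ∣ Fintype.card F - 1) : 0 < k :=
  Nat.pos_of_dvd_of_pos hk (Nat.sub_pos_of_lt Fintype.one_lt_card)

theorem exists_isPrimitiveRoot_of_dvd_card_sub_one {k : ℕ} (hk : k ∣ Fintype.card F - 1) :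
    ∃ ζ : F, IsPrimitiveRoot ζ k := by
  obtain ⟨g, hg⟩ := IsCyclic.exists_ofOrder_eq_natCard (α := Fˣ)
  rw [Nat.card_units, Nat.card_eq_fintype_card] at hg
  have hq : 0 < Fintype.card F - 1 := Nat.sub_pos_of_lt Fintype.one_lt_card
  have hd : (Fintype.card F - 1) / k ≠ 0 :=
    (Nat.div_pos (Nat.le_of_dvd hq hk) (pos_of_dvd_card_sub_one hk)).ne'
  have hg' : IsPrimitiveRoot (g : F) (Fintype.card F - 1) :=
    IsPrimitiveRoot.coe_units_iff.2 (hg ▸ IsPrimitiveRoot.orderOf g)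
  refine ⟨(g : F) ^ ((Fintype.card F - 1) / k), ?_⟩
  simpa only [Nat.div_div_self hk hq.ne'] using hg'.pow_of_dvd hd (Nat.div_dvd_of_dvd hk)

variable [DecidableEq F]

theorem card_filter_pow_eq_of_mem_nonzeroPowers {k : ℕ} (hk : k ∣ Fintype.card F - 1) {r : F}
    (hr : r ∈ nonzeroPowers F k) : #{x ∈ {x | x ≠ 0} | x ^ k = r} = k := by
  obtain ⟨x₀, hx₀, rfl⟩ := mem_image.1 hr
  obtain ⟨ζ, hζ⟩ := exists_isPrimitiveRoot_of_dvd_card_sub_one hk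
  have hk0 := pos_of_dvd_card_sub_one hk
  have hr0 : x₀ ^ k ≠ 0 := pow_ne_zero k (mem_filter.1 hx₀).2
  have hfib : ({x ∈ {x | x ≠ 0} | x ^ k = x₀ ^ k} : Finset F)
      = Polynomial.nthRootsFinset k (x₀ ^ k) := by
    ext x
    simp only [mem_filter, mem_univ, true_and, Polynomial.mem_nthRootsFinset hk0,
      and_iff_right_iff_imp]
    rintro hx rfl
    exact hr0 (by rw [← hx, zero_pow hk0.ne'])
  rw [hfib, Polynomial.nthRootsFinset_def,
    Multiset.toFinset_card_of_nodup (hζ.nthRoots_nodup hr0), hζ.card_nthRoots, if_pos ⟨x₀, rfl⟩]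

theorem sum_pow_eq_nsmul_sum_nonzeroPowers {M : Type*} [AddCommMonoid M] {k : ℕ}
    (hk : k ∣ Fintype.card F - 1) (g : F → M) :
    ∑ x ∈ {x | x ≠ 0}, g (x ^ k) = k • ∑ r ∈ nonzeroPowers F k, g r := by
  rw [sum_comp, smul_sum]
  exact sum_congr rfl fun r hr => by rw [card_filter_pow_eq_of_mem_nonzeroPowers hk hr]

theorem card_nonzeroPowers {k n : ℕ} (h : n * k = Fintype.card F - 1) :
    #(nonzeroPowers F k) = n := by
  have hk : k ∣ Fintype.card F - 1 := Dvd.intro_left n h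
  have hsum := sum_pow_eq_nsmul_sum_nonzeroPowers hk fun _ => 1
  simp only [sum_const, smul_eq_mul, mul_one, filter_ne', card_erase_of_mem (mem_univ _),
    card_univ, ← h] at hsum
  exact Nat.eq_of_mul_eq_mul_left (pos_of_dvd_card_sub_one hk) (by rw [← hsum, mul_comm])

theorem nonzeroPowers_eq_nthRootsFinset {k n : ℕ} (h : n * k = Fintype.card F - 1) :
    nonzeroPowers F k = Polynomial.nthRootsFinset n (1 : F) := by
  have hn : n ∣ Fintype.card F - 1 := Dvd.intro k h
  obtain ⟨ζ, hζ⟩ := exists_isPrimitiveRoot_of_dvd_card_sub_one hn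
  refine eq_of_subset_of_card_le (fun r hr => ?_) ?_
  · obtain ⟨x, hx, rfl⟩ := mem_image.1 hr
    rw [Polynomial.mem_nthRootsFinset (pos_of_dvd_card_sub_one hn), ← pow_mul, mul_comm, h,
      FiniteField.pow_card_sub_one_eq_one x (mem_filter.1 hx).2]
  · rw [hζ.card_nthRootsFinset, card_nonzeroPowers h]

theorem mul_mem_nonzeroPowers {k : ℕ} {r s : F} (hr : r ∈ nonzeroPowers F k)
    (hs : s ∈ nonzeroPowers F k) : r * s ∈ nonzeroPowers F k := by
  obtain ⟨x, hx, rfl⟩ := mem_image.1 hr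
  obtain ⟨y, hy, rfl⟩ := mem_image.1 hs
  simp only [mem_filter, mem_univ, true_and] at hx hy
  exact mem_image.2 ⟨x * y, by simpa using mul_ne_zero hx hy, mul_pow x y k⟩

theorem algebraMap_mul_mem_nonzeroPowers {p k n : ℕ} [Fact p.Prime] [Algebra (ZMod p) F]
    (h : n * k = Fintype.card F - 1) (hpn : p - 1 ∣ n) {c : ZMod p} (hc : c ≠ 0) {r : F}
    (hr : r ∈ nonzeroPowers F k) : algebraMap (ZMod p) F c * r ∈ nonzeroPowers F k := by
  refine mul_mem_nonzeroPowers ?_ hr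
  obtain ⟨s, rfl⟩ := hpn
  rw [nonzeroPowers_eq_nthRootsFinset h,
    Polynomial.mem_nthRootsFinset (pos_of_dvd_card_sub_one (Dvd.intro k h)), ← map_pow, pow_mul,
    ZMod.pow_card_sub_one_eq_one hc, one_pow, map_one]

end PowerResidues

section ArtinSchreier

variable (p : ℕ) [Fact p.Prime] (F : Type*) [Field F] [Fintype F] [Algebra (ZMod p) F]

-- Built from the Frobenius automorphism so that linearity and trace invariance come for free.
noncomputable def artinSchreier : F →ₗ[ZMod p] F :=
  (FiniteField.frobeniusAlgEquivOfAlgebraic (ZMod p) F).toLinearMap - LinearMap.id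

variable {p F}

theorem artinSchreier_apply (y : F) : artinSchreier p F y = y ^ p - y := by
  simp [artinSchreier]

theorem trace_artinSchreier (y : F) : Algebra.trace (ZMod p) F (artinSchreier p F y) = 0 := by
  rw [artinSchreier, LinearMap.sub_apply, map_sub, AlgEquiv.toLinearMap_apply,
    Algebra.trace_eq_of_algEquiv, LinearMap.id_apply, sub_self]

theorem card_filter_trace_eq_zero :
    p * #{y : F | Algebra.trace (ZMod p) F y = 0} = Fintype.card F := by
  have h := AddMonoidHom.card_image_mul_card_filter_eq_zero (Algebra.trace (ZMod p) F)
  rwa [image_univ_of_surjective (Algebra.trace_surjective _ _), card_univ, ZMod.card] at h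

variable [DecidableEq F]

theorem card_filter_artinSchreier_eq_zero : #{y : F | artinSchreier p F y = 0} = p := by
  have hp := (Fact.out : p.Prime).one_lt
  simp only [artinSchreier_apply, sub_eq_zero]
  refine le_antisymm ?_ ?_
  · have hne := FiniteField.X_pow_card_sub_X_ne_zero F hp
    refine (Polynomial.card_le_degree_of_subset_roots fun y hy => ?_).trans
      (FiniteField.X_pow_card_sub_X_natDegree_eq F hp).le
    rw [Finset.mem_val, mem_filter] at hy
    simp [Polynomial.mem_roots hne, hy.2]
  · calc p = #(univ.image (algebraMap (ZMod p) F)) := by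
          rw [card_image_of_injective _ (algebraMap (ZMod p) F).injective, card_univ, ZMod.card]
      _ ≤ _ := card_le_card fun y hy => by
          obtain ⟨c, -, rfl⟩ := mem_image.1 hy
          simp [← map_pow, ZMod.pow_card]

theorem image_artinSchreier :
    univ.image (artinSchreier p F) = ({y | Algebra.trace (ZMod p) F y = 0} : Finset F) := by
  refine eq_of_subset_of_card_le (fun c hc => ?_) ?_
  · obtain ⟨y, -, rfl⟩ := mem_image.1 hc
    simp [trace_artinSchreier]
  · have h := AddMonoidHom.card_image_mul_card_filter_eq_zero (artinSchreier p F)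
    rw [card_filter_artinSchreier_eq_zero] at h
    exact Nat.le_of_mul_le_mul_left (by rw [card_filter_trace_eq_zero, ← h, mul_comm])
      (Fact.out : p.Prime).pos

theorem card_filter_pow_sub_self_eq (c : F) :
    #{y : F | y ^ p - y = c} = if Algebra.trace (ZMod p) F c = 0 then p else 0 := by
  simp only [← artinSchreier_apply]
  split_ifs with hc
  · have hc' : c ∈ univ.image (artinSchreier p F) := by
      rw [image_artinSchreier]
      simpa using hc
    obtain ⟨y, -, hy⟩ := mem_image.1 hc'
    exact (AddMonoidHom.card_fiber_eq_of_mem_range (artinSchreier p F) ⟨y, hy⟩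
      ⟨0, map_zero _⟩).trans card_filter_artinSchreier_eq_zero
  · exact card_eq_zero.2 (filter_eq_empty_iff.2 fun y _ hy => hc (hy ▸ trace_artinSchreier y))

end ArtinSchreier

section TraceFibers

variable {p : ℕ} [Fact p.Prime] {A : Type*} [CommRing A] [Algebra (ZMod p) A] {S : Finset A}

theorem card_filter_trace_mul_eq_of_ne_zero
    (hS : ∀ c : ZMod p, c ≠ 0 → ∀ r ∈ S, algebraMap (ZMod p) A c * r ∈ S) (β : A)
    {c : ZMod p} (hc : c ≠ 0) :
    #{r ∈ S | Algebra.trace (ZMod p) A (β * r) = c}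
      = #{r ∈ S | Algebra.trace (ZMod p) A (β * r) = 1} := by
  have htr : ∀ (a : ZMod p) (r : A),
      Algebra.trace (ZMod p) A (β * (algebraMap (ZMod p) A a * r))
        = a * Algebra.trace (ZMod p) A (β * r) := fun a r => by
    rw [mul_left_comm, ← Algebra.smul_def, map_smul, smul_eq_mul]
  have hcancel : ∀ (a b : ZMod p) (r : A), a * b = 1 →
      algebraMap (ZMod p) A a * (algebraMap (ZMod p) A b * r) = r := fun a b r hab => by
    rw [← mul_assoc, ← map_mul, hab, map_one, one_mul]
  refine card_nbij' (algebraMap (ZMod p) A c⁻¹ * ·) (algebraMap (ZMod p) A c * ·) ?_ ?_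
    (fun r _ => hcancel _ _ r (mul_inv_cancel₀ hc)) (fun r _ => hcancel _ _ r (inv_mul_cancel₀ hc))
  · intro r hr
    simp only [mem_coe, mem_filter] at hr ⊢
    exact ⟨hS _ (inv_ne_zero hc) r hr.1, by rw [htr, hr.2, inv_mul_cancel₀ hc]⟩
  · intro r hr
    simp only [mem_coe, mem_filter] at hr ⊢
    exact ⟨hS _ hc r hr.1, by rw [htr, hr.2, mul_one]⟩

theorem card_filter_trace_add_mul_card_filter
    (hS : ∀ c : ZMod p, c ≠ 0 → ∀ r ∈ S, algebraMap (ZMod p) A c * r ∈ S) (β : A) :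
    #{r ∈ S | Algebra.trace (ZMod p) A (β * r) = 0}
      + (p - 1) * #{r ∈ S | Algebra.trace (ZMod p) A (β * r) = 1} = #S := by
  symm
  rw [card_eq_sum_card_fiberwise (f := fun r => Algebra.trace (ZMod p) A (β * r))
    (t := univ) fun _ _ => mem_univ _, Fintype.sum_eq_add_sum_compl 0,
    sum_const_nat fun c hc => card_filter_trace_mul_eq_of_ne_zero hS β (by simpa using hc),
    card_compl, card_singleton, ZMod.card]

end TraceFibers

section PaleyEigenvalue

variable {p : ℕ} [Fact p.Prime] {F : Type} [Field F] [Fintype F] [DecidableEq F]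
  [Algebra (ZMod p) F] {k : ℕ}

theorem card_filter_trace_mul_pow_eq_zero (hk : k ∣ Fintype.card F - 1) (β : F) :
    #{x : F | Algebra.trace (ZMod p) F (β * x ^ k) = 0}
      = 1 + k * #{r ∈ nonzeroPowers F k | Algebra.trace (ZMod p) F (β * r) = 0} := by
  rw [card_filter, ← add_sum_erase _ _ (mem_univ 0), ← filter_ne',
    sum_pow_eq_nsmul_sum_nonzeroPowers hk
      fun r => if Algebra.trace (ZMod p) F (β * r) = 0 then 1 else 0,
    ← card_filter, smul_eq_mul]
  simp [zero_pow (pos_of_dvd_card_sub_one hk).ne']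

theorem card_affinePoints_artinSchreier (hk : k ∣ Fintype.card F - 1) (β : F) :
    #{xy : F × F | xy.2 ^ p - xy.2 = β * xy.1 ^ k}
      = p * (1 + k * #{r ∈ nonzeroPowers F k | Algebra.trace (ZMod p) F (β * r) = 0}) := by
  rw [card_filter_prod_eq_sum (fun x y => y ^ p - y = β * x ^ k),
    ← card_filter_trace_mul_pow_eq_zero hk, card_filter, mul_sum]
  refine sum_congr rfl fun x _ => ?_
  rw [card_filter_pow_sub_self_eq]
  split_ifs <;> simp

theorem paleyEig_eq_card_sub_card {n : ℕ} (h : n * k = Fintype.card F - 1) (hpn : p - 1 ∣ n)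
    (β : F) :
    paleyEig p F k β = #{r ∈ nonzeroPowers F k | Algebra.trace (ZMod p) F (β * r) = 0}
      - #{r ∈ nonzeroPowers F k | Algebra.trace (ZMod p) F (β * r) = 1} :=
  (isPrimitiveRoot_zetaP (Fact.out : p.Prime).ne_zero).sum_pow_val_eq_card_sub_card _ _
    fun _ hc => card_filter_trace_mul_eq_of_ne_zero
      (fun _ hc' _ => algebraMap_mul_mem_nonzeroPowers h hpn hc') β hc

end PaleyEigenvalue

theorem sub_one_dvd_of_dvd_div_sub_one {p m k n : ℕ} (hk : 0 < k)
    (hkdvd : k ∣ (p ^ m - 1) / (p - 1)) (hn : n * k = p ^ m - 1) : p - 1 ∣ n := by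
  obtain ⟨s, hs⟩ := hkdvd
  refine ⟨s, Nat.eq_of_mul_eq_mul_right hk ?_⟩
  have hdvd : p - 1 ∣ p ^ m - 1 := by simpa using Nat.sub_dvd_pow_sub_pow p 1 m
  rw [hn, ← Nat.mul_div_cancel' hdvd, hs]
  ring

theorem stmt12_general (p k m n : ℕ) (hp : p.Prime) (hk : 0 < k)
    (hkdvd : k ∣ (p ^ m - 1) / (p - 1)) (hn : n * k = p ^ m - 1)
    (F : Type) [Field F] [Fintype F] [DecidableEq F] [Algebra (ZMod p) F]
    (hF : Fintype.card F = p ^ m) :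
    ∀ β : F,
      ((1 : ℂ) +
        ((Finset.univ.filter fun xy : F × F => xy.2 ^ p - xy.2 = β * xy.1 ^ k).card : ℂ))
        = (p : ℂ) ^ m + (p : ℂ) + (k : ℂ) * ((p : ℂ) - 1) * paleyEig p F k β
      ∧ ∃ z : ℤ, paleyEig p F k β = (z : ℂ) := by
  intro β
  have := Fact.mk hp
  have hq : n * k = Fintype.card F - 1 := hF ▸ hn
  have hpn : p - 1 ∣ n := sub_one_dvd_of_dvd_div_sub_one hk hkdvd hn
  set A := #{r ∈ nonzeroPowers F k | Algebra.trace (ZMod p) F (β * r) = 0}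
  set B := #{r ∈ nonzeroPowers F k | Algebra.trace (ZMod p) F (β * r) = 1}
  have hEig : paleyEig p F k β = A - B := paleyEig_eq_card_sub_card hq hpn β
  have hcount : A + (p - 1) * B = n := (card_filter_trace_add_mul_card_filter
    (fun _ hc _ => algebraMap_mul_mem_nonzeroPowers hq hpn hc) β).trans (card_nonzeroPowers hq)
  have hN : #{xy : F × F | xy.2 ^ p - xy.2 = β * xy.1 ^ k} = p * (1 + k * A) :=
    card_affinePoints_artinSchreier (Dvd.intro_left n hq) β
  refine ⟨?_, A - B, by rw [hEig]; push_cast; ring⟩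
  rw [hN, hEig]
  have hpm : 0 < p ^ m := pow_pos hp.pos m
  have hq' : (n : ℂ) * k + 1 = (p : ℂ) ^ m := by exact_mod_cast (by omega : n * k + 1 = p ^ m)
  have hcount' := congrArg (Nat.cast : ℕ → ℂ) hcount
  push_cast [Nat.cast_sub hp.one_le] at hcount' ⊢
  linear_combination (k : ℂ) * hcount' + hq'

theorem stmt12 (p k m n : ℕ) (hp : p.Prime) (hm : 0 < m) (hk : 0 < k)
    (hkdvd : k ∣ (p ^ m - 1) / (p - 1)) (hn : n * k = p ^ m - 1)
    (hnprim : IsPrimitiveDivisor n p m)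
    (F : Type) [Field F] [Fintype F] [DecidableEq F] [Algebra (ZMod p) F]
    (hF : Fintype.card F = p ^ m) :
    ∀ β : F,
      ((1 : ℂ) +
        ((Finset.univ.filter fun xy : F × F => xy.2 ^ p - xy.2 = β * xy.1 ^ k).card : ℂ))
        = (p : ℂ) ^ m + (p : ℂ) + (k : ℂ) * ((p : ℂ) - 1) * paleyEig p F k β
      ∧ ∃ z : ℤ, paleyEig p F k β = (z : ℂ) :=
  stmt12_general p k m n hp hk hkdvd hn F hF
end
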